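/- arXiv:2109.11417 — 2 statements merged into one kernel-verified Lean document; each statement's English description precedes it below -/
import Mathlib

section
/- Let T be a proper (single) (s,n)-table in a normal form. Then the dimension of the simplicial complex S(K(T)) equals s, the number of colours of T. (Faces of S(K(T)) are supports of minimal generators and their subsets; dimension of a face with cardinality c is c−1, and the dimension of the complex is the maximal face dimension, so the claim is that the maximal support size among minimal generators equals s+1.) -/
/-! The support `{1,…,i} ∪ {j}` of `m_{i,j}` has `i + 1 ≤ s + 1` elements, so it suffices to
find a nonzero entry `α s j` with `j > s`. For `s = 0` this is `d_1 > 0`, by strictness at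
column `1`. For `s ≥ 1`, comparing the defining equation of `d_s` with strictness at column `s`
shows `α s s < ∑_{j > s} α s j`, so the last row has a nonzero entry to the right of the diagonal. -/

open MvPolynomial Finset

/-- An `(s,n)`-table: an `(s+1) × n` matrix of non-negative integers `α i j`
(rows `0..s`, columns `1..n`, with `d j := α 0 j`) satisfying the table axioms. -/
def IsTable (s n : ℕ) (α : ℕ → ℕ → ℕ) : Prop :=
  s < n ∧
  (∀ i j, 1 ≤ i → i ≤ s → j < i → α i j = 0) ∧
  (∀ j, 1 ≤ j → j ≤ n → ∑ i ∈ Finset.Icc 1 s, α i j ≤ α 0 j) ∧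
  (∀ k, 1 ≤ k → k ≤ s →
    α 0 k = ∑ i ∈ Finset.Icc 1 (k - 1), α i k + ∑ j ∈ Finset.Icc (k + 1) n, α k j
      + (if k + 1 ≤ s then α (k + 1) (k + 1) else 0))

/-- The generator `m_{i,j}` of `K(T)`, with columns `t` mapped to the variable `v t`:
`m_{i,j} = x_1^{d_1-α_{1,1}} ⋯ x_i^{d_i-α_{1,i}-⋯-α_{i,i}} · x_j^{d_j-α_{1,j}-⋯-α_{i,j}}`. -/
noncomputable def mGenV (𝕜 : Type*) [Field 𝕜] (v : ℕ → ℕ) (α : ℕ → ℕ → ℕ) (i j : ℕ) :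
    MvPolynomial ℕ 𝕜 :=
  (∏ t ∈ Finset.Icc 1 i, X (v t) ^ (α 0 t - ∑ r ∈ Finset.Icc 1 i, α r t)) *
    X (v j) ^ (α 0 j - ∑ r ∈ Finset.Icc 1 i, α r j)

/-- The generator `m_{i,j}` with the default variable order. -/
noncomputable def mGen (𝕜 : Type*) [Field 𝕜] (α : ℕ → ℕ → ℕ) (i j : ℕ) :
    MvPolynomial ℕ 𝕜 :=
  mGenV 𝕜 id α i j

/-- The ideal `K(T)` associated to an `(s,n)`-table, generated by all `m_{i,j}`,
`0 ≤ i ≤ s`, `i < j ≤ n`, in `𝕜[x_1,…,x_n]` (viewed inside `MvPolynomial ℕ 𝕜`). -/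
noncomputable def KIdeal (𝕜 : Type*) [Field 𝕜] (s n : ℕ) (α : ℕ → ℕ → ℕ) :
    Ideal (MvPolynomial ℕ 𝕜) :=
  Ideal.span {m | ∃ i j, i ≤ s ∧ i < j ∧ j ≤ n ∧ m = mGen 𝕜 α i j}

/-- A table is in normal form: nonzero diagonal entries, no unconstrained almost-zero
columns, and strict column inequalities. -/
def NormalForm (s n : ℕ) (α : ℕ → ℕ → ℕ) : Prop :=
  (∀ i, 1 ≤ i → i ≤ s → α i i ≠ 0) ∧
  (1 ≤ s → ∀ j, s + 1 ≤ j → j ≤ n → ∃ i, 1 ≤ i ∧ i ≤ s ∧ α i j ≠ 0) ∧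
  (∀ j, 1 ≤ j → j ≤ n → ∑ i ∈ Finset.Icc 1 s, α i j < α 0 j)

lemma card_insert_Icc_one {i j : ℕ} (hij : i < j) : (insert j (Icc 1 i)).card = i + 1 := by
  rw [card_insert_of_notMem (by simp; omega), Nat.card_Icc]
  omega

lemma IsTable.diag_lt_sum_last_row {s n : ℕ} {α : ℕ → ℕ → ℕ} (hT : IsTable s n α)
    (hNF : NormalForm s n α) (hs : 1 ≤ s) : α s s < ∑ j ∈ Icc (s + 1) n, α s j := by
  obtain ⟨t, rfl⟩ : ∃ t, s = t + 1 := ⟨s - 1, by omega⟩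
  have hd : α 0 (t + 1) =
      ∑ i ∈ Icc 1 t, α i (t + 1) + ∑ j ∈ Icc (t + 1 + 1) n, α (t + 1) j := by
    simpa using hT.2.2.2 (t + 1) hs le_rfl
  have hstrict := hNF.2.2 (t + 1) hs (by have := hT.1; omega)
  rw [sum_Icc_succ_top (by omega)] at hstrict
  omega

lemma IsTable.exists_last_row_ne_zero {s n : ℕ} {α : ℕ → ℕ → ℕ} (hT : IsTable s n α)
    (hNF : NormalForm s n α) : ∃ j, s < j ∧ j ≤ n ∧ α s j ≠ 0 := by
  rcases Nat.eq_zero_or_pos s with rfl | hs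
  · have hd : 0 < α 0 1 := by simpa using hNF.2.2 1 le_rfl hT.1
    exact ⟨1, one_pos, hT.1, hd.ne'⟩
  · obtain ⟨j, hj, hne⟩ :=
      exists_ne_zero_of_sum_ne_zero (hT.diag_lt_sum_last_row hNF hs).ne_bot
    rw [mem_Icc] at hj
    exact ⟨j, by omega, hj.2, hne⟩

theorem stmt9_general (s n : ℕ) (α : ℕ → ℕ → ℕ) (hT : IsTable s n α)
    (hNF : NormalForm s n α) :
    (∃ i j, i ≤ s ∧ i < j ∧ j ≤ n ∧ α i j ≠ 0 ∧
      (insert j (Finset.Icc 1 i)).card = s + 1) ∧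
    (∀ i j, i ≤ s → i < j → j ≤ n → α i j ≠ 0 →
      (insert j (Finset.Icc 1 i)).card ≤ s + 1) := by
  refine ⟨?_, fun i j hi hij _ _ => by rw [card_insert_Icc_one hij]; omega⟩
  obtain ⟨j, hsj, hjn, hne⟩ := hT.exists_last_row_ne_zero hNF
  exact ⟨s, j, le_rfl, hsj, hjn, hne, card_insert_Icc_one hsj⟩

/-- for a single proper table in normal form, the dimension of
`S(K(T))` is `s`: the maximal support cardinality among minimal generators
(supports `{1,…,i} ∪ {j}` for pairs with `α_{i,j} ≠ 0`) is exactly `s + 1`. -/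
theorem stmt9 (𝕜 : Type*) [Field 𝕜] (s n : ℕ) (α : ℕ → ℕ → ℕ) (hT : IsTable s n α)
    (hproper : KIdeal 𝕜 s n α ≠ ⊤) (hNF : NormalForm s n α) :
    (∃ i j, i ≤ s ∧ i < j ∧ j ≤ n ∧ α i j ≠ 0 ∧
      (insert j (Finset.Icc 1 i)).card = s + 1) ∧
    (∀ i j, i ≤ s → i < j → j ≤ n → α i j ≠ 0 →
      (insert j (Finset.Icc 1 i)).card ≤ s + 1) :=
  stmt9_general s n α hT hNF
end

section
/- Let K = (x_1^4, x_2^5, x_3^6, x_1^2 x_2, x_1^3 x_3) in k[x_1, x_2, x_3]. Then K is not a table ideal: there is no (generalised) table T with K(T) = K. (Indeed, F(K) = ∅: x_1 has different exponents 2 and 3 in the two mixed generators, x_2 does not appear in x_1^3 x_3, and x_3 does not appear in x_1^2 x_2, so no variable can serve as the first constrained variable.) -/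
/-!
The mixed generators `x₁²x₂` and `x₁³x₃` are minimal, so both are generators `m_{i,j}`,
`m_{i',j'}` of `K(T)`, and as they share `x₁` they come from the same table. In `m_{i,j}` the
exponents of the prefix variables `x_1, …, x_i` depend only on the column, so if `i ≤ i'` every
variable of `m_{i,j}` except `x_j` keeps its exponent in `m_{i',j'}`. But each of the two
monomials has two variables whose exponents differ in the other: `x₁, x₂` resp. `x₁, x₃`.
-/

open MvPolynomial Finset

/-- A generalised table: a disjoint union of tables on disjoint sets of variables. -/
structure GenTable where
  num : ℕ
  s : Fin num → ℕ
  n : Fin num → ℕ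
  α : Fin num → ℕ → ℕ → ℕ
  var : Fin num → ℕ → ℕ
  var_inj : ∀ c c' j j', 1 ≤ j → j ≤ n c → 1 ≤ j' → j' ≤ n c' →
    var c j = var c' j' → c = c' ∧ j = j'
  table : ∀ c, IsTable (s c) (n c) (α c)

/-- The ideal associated to a generalised table: the sum of the ideals of the
individual tables. -/
noncomputable def gKIdeal (𝕜 : Type*) [Field 𝕜] (T : GenTable) :
    Ideal (MvPolynomial ℕ 𝕜) :=
  Ideal.span {m | ∃ c i j, i ≤ T.s c ∧ i < j ∧ j ≤ T.n c ∧
    m = mGenV 𝕜 (T.var c) (T.α c) i j}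

/-- A generalised table is in normal form iff each individual table is. -/
def gNormal (T : GenTable) : Prop := ∀ c, NormalForm (T.s c) (T.n c) (T.α c)

namespace MvPolynomial

variable {σ R : Type*} [CommSemiring R] [Nontrivial R]

theorem monomial_one_mem_span_monomial_image_iff {f : σ →₀ ℕ} {S : Set (σ →₀ ℕ)} :
    monomial f (1 : R) ∈ Ideal.span ((fun s => monomial s (1 : R)) '' S) ↔ ∃ g ∈ S, g ≤ f := by
  classical
  simp [mem_ideal_span_monomial_image, support_monomial]

theorem mem_of_span_monomial_image_eq {S S' : Set (σ →₀ ℕ)}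
    (h : Ideal.span ((fun s => monomial s (1 : R)) '' S) =
      Ideal.span ((fun s => monomial s (1 : R)) '' S'))
    {f : σ →₀ ℕ} (hf : f ∈ S) (hmin : ∀ g ∈ S, g ≤ f → g = f) : f ∈ S' := by
  have hf' : monomial f (1 : R) ∈ Ideal.span ((fun s => monomial s (1 : R)) '' S') :=
    h ▸ Ideal.subset_span ⟨f, hf, rfl⟩
  obtain ⟨g', hg', hg'f⟩ := monomial_one_mem_span_monomial_image_iff.mp hf'
  have hg'' : monomial g' (1 : R) ∈ Ideal.span ((fun s => monomial s (1 : R)) '' S) :=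
    h ▸ Ideal.subset_span ⟨g', hg', rfl⟩
  obtain ⟨g, hg, hgg'⟩ := monomial_one_mem_span_monomial_image_iff.mp hg''
  obtain rfl : g = f := hmin g hg (hgg'.trans hg'f)
  rwa [le_antisymm hg'f hgg'] at hg'

end MvPolynomial

noncomputable def mGenVExp (v : ℕ → ℕ) (α : ℕ → ℕ → ℕ) (i j : ℕ) : ℕ →₀ ℕ :=
  ∑ t ∈ Icc 1 i, Finsupp.single (v t) (α 0 t - ∑ r ∈ Icc 1 i, α r t) +
    Finsupp.single (v j) (α 0 j - ∑ r ∈ Icc 1 i, α r j)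

theorem mGenV_eq_monomial (𝕜 : Type*) [Field 𝕜] (v : ℕ → ℕ) (α : ℕ → ℕ → ℕ) (i j : ℕ) :
    mGenV 𝕜 v α i j = monomial (mGenVExp v α i j) 1 := by
  rw [mGenVExp, ← mul_one (1 : 𝕜), ← monomial_mul, monomial_sum_one]
  simp only [mGenV, X_pow_eq_monomial]

theorem IsTable.sum_Icc_eq_of_le {s n : ℕ} {α : ℕ → ℕ → ℕ} (hα : IsTable s n α) {i t : ℕ}
    (ht : t ≤ i) (hi : i ≤ s) : ∑ r ∈ Icc 1 i, α r t = ∑ r ∈ Icc 1 t, α r t := by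
  refine (sum_subset (Icc_subset_Icc_right ht) fun r hr hrt => ?_).symm
  rw [mem_Icc] at hr hrt
  exact hα.2.1 r t hr.1 (hr.2.trans hi) (by omega)

section mGenVExp

variable {v : ℕ → ℕ} {α : ℕ → ℕ → ℕ} {s n i j : ℕ}

theorem exists_of_mGenVExp_apply_ne_zero {w : ℕ} (h : mGenVExp v α i j w ≠ 0) :
    ∃ t, (t ∈ Icc 1 i ∨ t = j) ∧ v t = w := by
  contrapose! h
  simp only [mGenVExp, Finsupp.add_apply, Finsupp.finsetSum_apply]
  rw [sum_eq_zero fun t ht => Finsupp.single_eq_of_ne' (h t (Or.inl ht)),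
    Finsupp.single_eq_of_ne' (h j (Or.inr rfl)), add_zero]

theorem mGenVExp_apply_of_mem_Icc (hα : IsTable s n α) (hv : Set.InjOn v (Set.Icc 1 n))
    (hi : i ≤ s) (hij : i < j) (hj : j ≤ n) {t : ℕ} (ht : t ∈ Icc 1 i) :
    mGenVExp v α i j (v t) = α 0 t - ∑ r ∈ Icc 1 t, α r t := by
  rw [mem_Icc] at ht
  have hvt : ∀ u, 1 ≤ u → u ≤ n → u ≠ t → v u ≠ v t := fun u hu hun hut hvu =>
    hut (hv ⟨hu, hun⟩ ⟨ht.1, by omega⟩ hvu)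
  simp only [mGenVExp, Finsupp.add_apply, Finsupp.finsetSum_apply]
  rw [sum_eq_single_of_mem t (mem_Icc.mpr ht), Finsupp.single_eq_same,
    Finsupp.single_eq_of_ne' (hvt j (by omega) hj (by omega)), add_zero,
    hα.sum_Icc_eq_of_le ht.2 hi]
  intro u hu hut
  rw [mem_Icc] at hu
  exact Finsupp.single_eq_of_ne' (hvt u hu.1 (by omega) hut)

/-- For `t ≤ i ≤ i'` the exponent of `x_t` is `d_t - α_{1,t} - ⋯ - α_{t,t}` in both `m_{i,j}` and
`m_{i',j'}`, so only the exponent of `x_j` can change. -/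
theorem mGenVExp_apply_eq_or_apply_eq (hα : IsTable s n α) (hv : Set.InjOn v (Set.Icc 1 n))
    {i' j' : ℕ} (hii' : i ≤ i') (hi' : i' ≤ s) (hij : i < j) (hj : j ≤ n) (hij' : i' < j')
    (hj' : j' ≤ n) {w y : ℕ} (hyw : y ≠ w) (hw : mGenVExp v α i j w ≠ 0)
    (hy : mGenVExp v α i j y ≠ 0) :
    mGenVExp v α i j w = mGenVExp v α i' j' w ∨ mGenVExp v α i j y = mGenVExp v α i' j' y := by
  have key : ∀ t ∈ Icc 1 i, mGenVExp v α i j (v t) = mGenVExp v α i' j' (v t) := fun t ht => by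
    have ht' : t ∈ Icc 1 i' := Icc_subset_Icc_right hii' ht
    rw [mGenVExp_apply_of_mem_Icc hα hv (hii'.trans hi') hij hj ht,
      mGenVExp_apply_of_mem_Icc hα hv hi' hij' hj' ht']
  obtain ⟨t, ht | rfl, rfl⟩ := exists_of_mGenVExp_apply_ne_zero hw
  · exact .inl (key t ht)
  obtain ⟨u, hu | rfl, rfl⟩ := exists_of_mGenVExp_apply_ne_zero hy
  · exact .inr (key u hu)
  · exact absurd rfl hyw

end mGenVExp

namespace GenTable

theorem injOn_var (T : GenTable) (c : Fin T.num) : Set.InjOn (T.var c) (Set.Icc 1 (T.n c)) :=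
  fun _ ht _ hu h => (T.var_inj c c _ _ ht.1 ht.2 hu.1 hu.2 h).2

def genExps (T : GenTable) : Set (ℕ →₀ ℕ) :=
  {e | ∃ c i j, i ≤ T.s c ∧ i < j ∧ j ≤ T.n c ∧ e = mGenVExp (T.var c) (T.α c) i j}

theorem gKIdeal_eq_span_monomial_genExps (𝕜 : Type*) [Field 𝕜] (T : GenTable) :
    gKIdeal 𝕜 T = Ideal.span ((fun e => monomial e (1 : 𝕜)) '' T.genExps) := by
  simp only [gKIdeal, genExps, mGenV_eq_monomial]
  congr 1
  ext m
  simp only [Set.mem_ofPred_eq, Set.mem_image]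
  constructor
  · rintro ⟨c, i, j, hi, hij, hj, rfl⟩
    exact ⟨_, ⟨c, i, j, hi, hij, hj, rfl⟩, rfl⟩
  · rintro ⟨_, ⟨c, i, j, hi, hij, hj, rfl⟩, rfl⟩
    exact ⟨c, i, j, hi, hij, hj, rfl⟩

/-- Sharing `x_w`, the two generators come from the same table. -/
theorem apply_eq_or_apply_eq_or_apply_eq {T : GenTable} {e e' : ℕ →₀ ℕ} (he : e ∈ T.genExps)
    (he' : e' ∈ T.genExps) {w y y' : ℕ} (hw : e w ≠ 0) (hw' : e' w ≠ 0) (hyw : y ≠ w)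
    (hy : e y ≠ 0) (hy'w : y' ≠ w) (hy' : e' y' ≠ 0) :
    e w = e' w ∨ e y = e' y ∨ e' y' = e y' := by
  obtain ⟨c, i, j, hi, hij, hj, rfl⟩ := he
  obtain ⟨c', i', j', hi', hij', hj', rfl⟩ := he'
  obtain ⟨t, ht, hvt⟩ := exists_of_mGenVExp_apply_ne_zero hw
  obtain ⟨t', ht', hvt'⟩ := exists_of_mGenVExp_apply_ne_zero hw'
  simp only [mem_Icc] at ht ht'
  obtain ⟨rfl, -⟩ := T.var_inj c c' t t' (by omega) (by omega) (by omega) (by omega)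
    (hvt.trans hvt'.symm)
  rcases le_total i i' with hii' | hi'i
  · rcases mGenVExp_apply_eq_or_apply_eq (T.table c) (T.injOn_var c) hii' hi' hij hj hij' hj'
      hyw hw hy with h | h
    · exact .inl h
    · exact .inr (.inl h)
  · rcases mGenVExp_apply_eq_or_apply_eq (T.table c) (T.injOn_var c) hi'i hi hij' hj' hij hj
      hy'w hw' hy' with h | h
    · exact .inl h.symm
    · exact .inr (.inr h)

end GenTable

/-- `K = (x_1^4, x_2^5, x_3^6, x_1^2 x_2, x_1^3 x_3)` is not a table
ideal: no generalised table `T` satisfies `K(T) = K`. -/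
theorem stmt14 (𝕜 : Type*) [Field 𝕜] :
    ¬ ∃ T : GenTable, gKIdeal 𝕜 T =
      Ideal.span ({X 1 ^ 4, X 2 ^ 5, X 3 ^ 6, X 1 ^ 2 * X 2, X 1 ^ 3 * X 3} :
        Set (MvPolynomial ℕ 𝕜)) := by
  rintro ⟨T, hT⟩
  have hK : ({X 1 ^ 4, X 2 ^ 5, X 3 ^ 6, X 1 ^ 2 * X 2, X 1 ^ 3 * X 3} :
      Set (MvPolynomial ℕ 𝕜)) = (fun e => monomial e (1 : 𝕜)) ''
        {Finsupp.single 1 4, Finsupp.single 2 5, Finsupp.single 3 6,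
          Finsupp.single 1 2 + Finsupp.single 2 1, Finsupp.single 1 3 + Finsupp.single 3 1} := by
    simp only [Set.image_insert_eq, Set.image_singleton, monomial_add_single,
      ← X_pow_eq_monomial, pow_one]
  rw [T.gKIdeal_eq_span_monomial_genExps 𝕜, hK] at hT
  have h4 : Finsupp.single 1 2 + Finsupp.single 2 1 ∈ T.genExps := by
    refine mem_of_span_monomial_image_eq hT.symm (by simp) ?_
    simp only [Set.mem_insert_iff, Set.mem_singleton_iff, Finsupp.le_def, Finsupp.coe_add,
      Pi.add_apply, forall_eq_or_imp, Std.le_refl, implies_true, forall_eq, true_and]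
    exact ⟨fun h => by simpa using h 1, fun h => by simpa using h 2, fun h => by simpa using h 3,
      fun h => by simpa using h 1⟩
  have h5 : Finsupp.single 1 3 + Finsupp.single 3 1 ∈ T.genExps := by
    refine mem_of_span_monomial_image_eq hT.symm (by simp) ?_
    simp only [Set.mem_insert_iff, Set.mem_singleton_iff, Finsupp.le_def, Finsupp.coe_add,
      Pi.add_apply, forall_eq_or_imp, forall_eq, Std.le_refl, implies_true, and_true]
    exact ⟨fun h => by simpa using h 1, fun h => by simpa using h 2, fun h => by simpa using h 3,
      fun h => by simpa using h 2⟩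
  -- the three alternatives read `2 = 3`, `1 = 0` and `1 = 0`
  simpa using GenTable.apply_eq_or_apply_eq_or_apply_eq h4 h5 (w := 1) (y := 2) (y' := 3)
    (by simp) (by simp) (by simp) (by simp) (by simp) (by simp)
end
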